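/- arXiv:2512.18349 — 6 statements merged into one kernel-verified Lean document; each statement's English description precedes it below -/
import Mathlib

section
/- For every linear order Γ, the map Δ ↦ H_Δ is an inclusion-preserving bijection from the end segments of Γ onto the convex subgroups of G = Lex(Γ →₀ ℤ); that is, every H_Δ is a convex subgroup of G, for end segments Δ, Δ' one has Δ ⊆ Δ' if and only if H_Δ ⊆ H_{Δ'}, and every convex subgroup of G equals H_Δ for a unique end segment Δ of Γ. -/
/-- An end segment of a linear order `Γ`: an upward closed subset. -/
def IsEndSegment {Γ : Type*} [LinearOrder Γ] (Δ : Set Γ) : Prop :=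
  ∀ ⦃i j : Γ⦄, i ∈ Δ → i ≤ j → j ∈ Δ

/-- A convex subgroup of `G = Lex (Γ →₀ ℤ)`, as a subset: it contains `0`, is closed under
addition and negation, and whenever `g ∈ H` and `|h| ≤ |g|` then `h ∈ H`. -/
def IsConvexSubgroup {Γ : Type*} [LinearOrder Γ] (H : Set (Lex (Γ →₀ ℤ))) : Prop :=
  (0 : Lex (Γ →₀ ℤ)) ∈ H ∧ (∀ a ∈ H, ∀ b ∈ H, a + b ∈ H) ∧ (∀ a ∈ H, -a ∈ H) ∧
    ∀ g ∈ H, ∀ h : Lex (Γ →₀ ℤ), |h| ≤ |g| → h ∈ H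

/-- `H_Δ = {g ∈ G | support g ⊆ Δ}`. -/
def HSeg {Γ : Type*} [LinearOrder Γ] (Δ : Set Γ) : Set (Lex (Γ →₀ ℤ)) :=
  {g | ↑(ofLex g).support ⊆ Δ}

/-! In the lexicographic order the absolute value is governed by the least index of the support:
if `|h| ≤ |g|` then every index in the support of `h` lies above some index in the support of `g`.
Hence `H_Δ` is convex for an end segment `Δ`. Conversely a convex subgroup `H` is recovered from
`Δ = {i | e_i ∈ H}`, where `e_i = single i 1`: since `e_j ≤ e_i` for `i ≤ j`, `Δ` is an end
segment; each `g ∈ H` satisfies `e_i ≤ 2|g|` for `i` in its support, so those `e_i` lie in `H`;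
and `H`, being a subgroup, contains every integer combination of the `e_i` with `i ∈ Δ`. -/

open Finsupp

namespace Finsupp.Lex

variable {Γ N : Type*} [LinearOrder Γ]

theorem exists_leading_index_of_nonneg [Zero N] [LinearOrder N] {b : Lex (Γ →₀ N)}
    (hb : 0 ≤ b) {i : Γ} (hi : i ∈ (ofLex b).support) :
    ∃ i₀ ≤ i, (∀ j < i₀, ofLex b j = 0) ∧ 0 < ofLex b i₀ := by
  obtain ⟨i₀, hbefore, hlead⟩ := lex_def.1 (hb.lt_of_ne (by rintro rfl; simp at hi))
  exact ⟨i₀, not_lt.1 fun h => mem_support_iff.1 hi (hbefore i h).symm,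
    fun j hj => (hbefore j hj).symm, hlead⟩

theorem lt_of_mem_support_lt [Zero N] [LinearOrder N] {a b : Lex (Γ →₀ N)} (hb : 0 ≤ b)
    {i : Γ} (hi : i ∈ (ofLex b).support) (ha : ∀ j ∈ (ofLex a).support, i < j) : a < b := by
  obtain ⟨i₀, hi₀, hbefore, hlead⟩ := exists_leading_index_of_nonneg hb hi
  have ha₀ : ∀ j ≤ i₀, ofLex a j = 0 := fun j hj =>
    notMem_support_iff.1 fun hj' => (ha j hj').not_ge (hj.trans hi₀)
  refine lex_def.2 ⟨i₀, fun j hj => ?_, ?_⟩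
  · rw [ha₀ j hj.le, hbefore j hj]
  · simpa [ha₀ i₀ le_rfl] using hlead

theorem support_abs [AddCommGroup N] [LinearOrder N] (g : Lex (Γ →₀ N)) :
    (ofLex |g|).support = (ofLex g).support := by
  rcases abs_choice g with h | h <;> rw [h]
  rw [ofLex_neg, support_neg]

theorem exists_mem_support_le_of_abs_le [AddCommGroup N] [LinearOrder N] [IsOrderedAddMonoid N]
    {g h : Lex (Γ →₀ N)} (hle : |h| ≤ |g|) {i : Γ} (hi : i ∈ (ofLex h).support) :
    ∃ j ∈ (ofLex g).support, j ≤ i := by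
  by_contra! hlt
  refine (lt_of_mem_support_lt (abs_nonneg h) (i := i) ?_ ?_).not_ge hle
  · rwa [support_abs]
  · simpa only [support_abs] using hlt

-- `b` itself may lie below `e_i`, e.g. `b = e_i - e_j` with `i < j`.
theorem single_one_le_add_self {b : Lex (Γ →₀ ℤ)} (hb : 0 ≤ b) {i : Γ}
    (hi : i ∈ (ofLex b).support) : toLex (single i 1) ≤ b + b := by
  obtain ⟨i₀, hi₀, hbefore, hlead⟩ := exists_leading_index_of_nonneg hb hi
  refine le_of_lt (lex_def.2 ⟨i₀, fun j hj => ?_, ?_⟩)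
  · simp [hbefore j hj, (hj.trans_le hi₀).ne']
  · have : single i (1 : ℤ) i₀ ≤ 1 := by rw [single_apply]; split_ifs <;> omega
    simp only [ofLex_toLex, ofLex_add, coe_add, Pi.add_apply]
    omega

theorem single_one_nonneg (i : Γ) : 0 ≤ toLex (single i (1 : ℤ)) :=
  toLex_monotone (single_nonneg.2 zero_le_one)

theorem single_one_anti : Antitone fun i : Γ => toLex (single i (1 : ℤ)) := by
  intro i j hij
  rcases hij.eq_or_lt with rfl | hij
  · exact le_rfl
  · refine (lt_of_mem_support_lt (single_one_nonneg i) (i := i) (by simp) fun k hk => ?_).le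
    rwa [Finset.mem_singleton.1 (support_single_subset hk)]

end Finsupp.Lex

section ConvexSubgroups

variable {Γ : Type*} [LinearOrder Γ]

theorem single_one_mem_hSeg_iff {Δ : Set Γ} {i : Γ} :
    toLex (single i (1 : ℤ)) ∈ HSeg Δ ↔ i ∈ Δ := by
  simp [HSeg]

theorem hSeg_subset_hSeg_iff {Δ Δ' : Set Γ} : HSeg Δ ⊆ HSeg Δ' ↔ Δ ⊆ Δ' :=
  ⟨fun h _ hi => single_one_mem_hSeg_iff.1 (h (single_one_mem_hSeg_iff.2 hi)),
    fun h _ hg => hg.trans h⟩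

theorem isConvexSubgroup_hSeg {Δ : Set Γ} (hΔ : IsEndSegment Δ) : IsConvexSubgroup (HSeg Δ) := by
  refine ⟨by simp [HSeg], fun a ha b hb i hi => ?_, fun a ha => ?_, fun g hg h hle i hi => ?_⟩
  · rcases Finset.mem_union.1 (support_add hi) with hi | hi
    exacts [ha hi, hb hi]
  · simpa [HSeg] using ha
  · obtain ⟨j, hj, hji⟩ := Finsupp.Lex.exists_mem_support_le_of_abs_le hle hi
    exact hΔ (hg hj) hji

def segmentOf (H : Set (Lex (Γ →₀ ℤ))) : Set Γ :=
  {i | toLex (single i 1) ∈ H}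

theorem segmentOf_hSeg (Δ : Set Γ) : segmentOf (HSeg Δ) = Δ :=
  Set.ext fun _ => single_one_mem_hSeg_iff

namespace IsConvexSubgroup

variable {H : Set (Lex (Γ →₀ ℤ))}

def toAddSubgroup (hH : IsConvexSubgroup H) : AddSubgroup (Lex (Γ →₀ ℤ)) where
  carrier := H
  zero_mem' := hH.1
  add_mem' ha hb := hH.2.1 _ ha _ hb
  neg_mem' ha := hH.2.2.1 _ ha

theorem mem_of_abs_le (hH : IsConvexSubgroup H) {g h : Lex (Γ →₀ ℤ)} (hg : g ∈ H)
    (hle : |h| ≤ |g|) : h ∈ H :=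
  hH.2.2.2 g hg h hle

theorem isEndSegment_segmentOf (hH : IsConvexSubgroup H) : IsEndSegment (segmentOf H) := by
  intro i j hi hij
  refine hH.mem_of_abs_le hi ?_
  rw [abs_of_nonneg (Finsupp.Lex.single_one_nonneg j),
    abs_of_nonneg (Finsupp.Lex.single_one_nonneg i)]
  exact Finsupp.Lex.single_one_anti hij

theorem single_one_mem (hH : IsConvexSubgroup H) {g : Lex (Γ →₀ ℤ)} (hg : g ∈ H) {i : Γ}
    (hi : i ∈ (ofLex g).support) : toLex (single i 1) ∈ H := by
  have habs : |g| ∈ H := hH.mem_of_abs_le hg (abs_abs g).le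
  refine hH.mem_of_abs_le (hH.toAddSubgroup.add_mem habs habs) ?_
  have hpos : 0 ≤ |g| + |g| := add_nonneg (abs_nonneg g) (abs_nonneg g)
  rw [abs_of_nonneg (Finsupp.Lex.single_one_nonneg i), abs_of_nonneg hpos]
  exact Finsupp.Lex.single_one_le_add_self (abs_nonneg g) (by rwa [Finsupp.Lex.support_abs])

theorem hSeg_segmentOf (hH : IsConvexSubgroup H) : HSeg (segmentOf H) = H := by
  ext g
  refine ⟨fun hg => ?_, fun hg i hi => hH.single_one_mem hg hi⟩
  have hsum : g = ∑ i ∈ (ofLex g).support, ofLex g i • toLex (single i 1) := by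
    refine (sum_single (ofLex g)).symm.trans (Finset.sum_congr rfl fun i _ => ?_)
    exact (smul_single_one i (ofLex g i)).symm
  rw [hsum]
  exact hH.toAddSubgroup.sum_mem fun i hi => hH.toAddSubgroup.zsmul_mem (hg hi) _

end IsConvexSubgroup

end ConvexSubgroups

/-- For every linear order `Γ`, the map `Δ ↦ H_Δ` is an inclusion-preserving bijection from the
end segments of `Γ` onto the convex subgroups of `G = Lex (Γ →₀ ℤ)`. -/
theorem stmt_0 {Γ : Type*} [LinearOrder Γ] :
    (∀ Δ : Set Γ, IsEndSegment Δ → IsConvexSubgroup (HSeg Δ)) ∧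
    (∀ Δ Δ' : Set Γ, IsEndSegment Δ → IsEndSegment Δ' → (Δ ⊆ Δ' ↔ HSeg Δ ⊆ HSeg Δ')) ∧
    (∀ H : Set (Lex (Γ →₀ ℤ)), IsConvexSubgroup H →
      ∃! Δ : Set Γ, IsEndSegment Δ ∧ HSeg Δ = H) := by
  refine ⟨fun Δ hΔ => isConvexSubgroup_hSeg hΔ, fun Δ Δ' _ _ => hSeg_subset_hSeg_iff.symm,
    fun H hH => ⟨segmentOf H, ⟨hH.isEndSegment_segmentOf, hH.hSeg_segmentOf⟩, ?_⟩⟩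
  rintro Δ ⟨-, rfl⟩
  exact (segmentOf_hSeg Δ).symm
end

section
/- Let Γ be a linear order, G = Lex(Γ →₀ ℤ), and let g ∈ G be nonzero with i the least element of the support of g. Then the set A = {h ∈ G | h = 0 ∨ i < least element of the support of h} is a convex subgroup of G not containing g, and every convex subgroup of G not containing g is contained in A; i.e., A is the largest convex subgroup A(g) of G not containing g. -/
/-!
The coordinates of `|y|` vanish exactly where those of `y` do, and `|y|` is positive at its first
nonzero coordinate. So if `x` vanishes at every index `≤ j` while `y j ≠ 0`, then `|x| < |y|`;
and if `x` only vanishes below `j`, then `|x| < n • |y|` for `n` large, by comparing the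
coordinates at the first nonzero index of `y`. The first fact makes
`A = {x | ∀ j ≤ i, x j = 0}` convex; the second shows that a convex subgroup containing an
element outside `A` contains every element vanishing below `i`, in particular `g`.
-/

namespace Finsupp.Lex

variable {α : Type*} [LinearOrder α]

/- `Finset.min` is `WithTop`-valued, but here it is compared in `WithBot α`, where the value
`none` of the empty support is the bottom element; hence the separate disjunct `x = 0`. -/
theorem eq_zero_or_lt_support_min_iff {M : Type*} [Zero M] (x : Lex (α →₀ M)) (i : α) :
    x = 0 ∨ (i : WithBot α) < (ofLex x).support.min ↔ ∀ j ≤ i, ofLex x j = 0 := by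
  rcases (ofLex x).support.eq_empty_or_nonempty with hx | hx
  · have hx : x = 0 := support_eq_empty.mp hx
    simp [hx]
  have hx0 : x ≠ 0 := fun h => by simp [h] at hx
  obtain ⟨m, hm⟩ := Finset.min_of_nonempty hx
  have hlt : (i : WithBot α) < (ofLex x).support.min ↔ i < m := by
    rw [hm]; exact WithBot.coe_lt_coe
  rw [hlt, or_iff_right hx0]
  refine ⟨fun him j hj => by_contra fun hj0 => ?_, fun h => lt_of_not_ge fun hmi => ?_⟩
  · exact (him.trans_le (Finset.min_le_of_eq (mem_support_iff.mpr hj0) hm)).not_ge hj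
  · exact mem_support_iff.mp (Finset.mem_of_min hm) (h m hmi)

variable {N : Type*} [AddCommGroup N] [LinearOrder N]

theorem ofLex_abs_apply_eq_zero_iff (x : Lex (α →₀ N)) (j : α) :
    ofLex |x| j = 0 ↔ ofLex x j = 0 := by
  rcases abs_choice x with h | h <;> simp [h]

variable [IsOrderedAddMonoid N]

theorem exists_le_abs_pos_of_apply_ne_zero {y : Lex (α →₀ N)} {j : α} (hy : ofLex y j ≠ 0) :
    ∃ m ≤ j, (∀ k < m, ofLex |y| k = 0) ∧ 0 < ofLex |y| m := by
  have hpos : 0 < |y| := abs_pos.mpr fun h => hy (by simp [h])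
  obtain ⟨m, hbelow, hm⟩ := lt_iff.mp hpos
  have hbelow : ∀ k < m, ofLex |y| k = 0 := fun k hk => (hbelow k hk).symm
  refine ⟨m, le_of_not_gt fun hjm => hy ?_, hbelow, hm⟩
  exact (ofLex_abs_apply_eq_zero_iff y j).mp (hbelow j hjm)

theorem abs_lt_abs_of_forall_le_apply_eq_zero {x y : Lex (α →₀ N)} {j : α}
    (hx : ∀ k ≤ j, ofLex x k = 0) (hy : ofLex y j ≠ 0) : |x| < |y| := by
  obtain ⟨m, hmj, hbelow, hm⟩ := exists_le_abs_pos_of_apply_ne_zero hy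
  have hx : ∀ k ≤ m, ofLex |x| k = 0 := fun k hk =>
    (ofLex_abs_apply_eq_zero_iff x k).mpr (hx k (hk.trans hmj))
  exact lt_iff.mpr ⟨m, fun k hk => by rw [hx k hk.le, hbelow k hk], by rwa [hx m le_rfl]⟩

theorem exists_abs_lt_nsmul_abs [Archimedean N] {x y : Lex (α →₀ N)} {j : α}
    (hx : ∀ k < j, ofLex x k = 0) (hy : ofLex y j ≠ 0) : ∃ n : ℕ, |x| < n • |y| := by
  obtain ⟨m, hmj, hbelow, hm⟩ := exists_le_abs_pos_of_apply_ne_zero hy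
  obtain ⟨n, hn⟩ := exists_lt_nsmul hm (ofLex |x| m)
  have hx : ∀ k < m, ofLex |x| k = 0 := fun k hk =>
    (ofLex_abs_apply_eq_zero_iff x k).mpr (hx k (hk.trans_le hmj))
  refine ⟨n, lt_iff.mpr ⟨m, fun k hk => ?_, hn⟩⟩
  change ofLex |x| k = n • ofLex |y| k
  rw [hx k hk, hbelow k hk, nsmul_zero]

end Finsupp.Lex

section ConvexSubgroup

variable {Γ : Type*} [LinearOrder Γ]

theorem isConvexSubgroup_setOf_forall_le_apply_eq_zero (i : Γ) :
    IsConvexSubgroup {x : Lex (Γ →₀ ℤ) | ∀ j ≤ i, ofLex x j = 0} := by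
  refine ⟨fun _ _ => rfl, fun a ha b hb j hj => ?_, fun a ha j hj => ?_, fun a ha h hle => ?_⟩
  · change ofLex a j + ofLex b j = 0
    rw [ha j hj, hb j hj, add_zero]
  · change -ofLex a j = 0
    rw [ha j hj, neg_zero]
  · intro j hj
    by_contra hhj
    exact (Finsupp.Lex.abs_lt_abs_of_forall_le_apply_eq_zero (fun k hk => ha k (hk.trans hj))
      hhj).not_ge hle

theorem IsConvexSubgroup.nsmul_mem {H : Set (Lex (Γ →₀ ℤ))} (hH : IsConvexSubgroup H)
    {x : Lex (Γ →₀ ℤ)} (hx : x ∈ H) (n : ℕ) : n • x ∈ H := by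
  induction n with
  | zero => simpa using hH.1
  | succ n ih => simpa [succ_nsmul] using hH.2.1 _ ih _ hx

theorem IsConvexSubgroup.subset_setOf_forall_le_apply_eq_zero {H : Set (Lex (Γ →₀ ℤ))}
    (hH : IsConvexSubgroup H) {g : Lex (Γ →₀ ℤ)} (hgH : g ∉ H) {i : Γ}
    (hg : ∀ k < i, ofLex g k = 0) : H ⊆ {x : Lex (Γ →₀ ℤ) | ∀ j ≤ i, ofLex x j = 0} := by
  intro x hx j hj
  by_contra hxj
  obtain ⟨n, hn⟩ := Finsupp.Lex.exists_abs_lt_nsmul_abs (fun k hk => hg k (hk.trans_le hj)) hxj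
  rw [← abs_nsmul] at hn
  exact hgH (hH.2.2.2 _ (hH.nsmul_mem hx n) g hn.le)

end ConvexSubgroup

theorem stmt_2_general {Γ : Type*} [LinearOrder Γ] (g : Lex (Γ →₀ ℤ)) (i : Γ)
    (hi : (ofLex g).support.min = (i : WithBot Γ)) :
    IsConvexSubgroup {h : Lex (Γ →₀ ℤ) | h = 0 ∨ (i : WithBot Γ) < (ofLex h).support.min} ∧
    g ∉ {h : Lex (Γ →₀ ℤ) | h = 0 ∨ (i : WithBot Γ) < (ofLex h).support.min} ∧
    ∀ H : Set (Lex (Γ →₀ ℤ)), IsConvexSubgroup H → g ∉ H →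
      H ⊆ {h : Lex (Γ →₀ ℤ) | h = 0 ∨ (i : WithBot Γ) < (ofLex h).support.min} := by
  have hgi : ofLex g i ≠ 0 := Finsupp.mem_support_iff.mp (Finset.mem_of_min hi)
  have hg : ∀ k < i, ofLex g k = 0 := fun k hk => by_contra fun hgk =>
    (Finset.min_le_of_eq (Finsupp.mem_support_iff.mpr hgk) hi).not_gt hk
  simp only [Finsupp.Lex.eq_zero_or_lt_support_min_iff]
  exact ⟨isConvexSubgroup_setOf_forall_le_apply_eq_zero i, fun hgA => hgi (hgA i le_rfl),
    fun H hH hgH => hH.subset_setOf_forall_le_apply_eq_zero hgH hg⟩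

/-- Let `g ∈ G = Lex (Γ →₀ ℤ)` be nonzero with `i` the least element of its support. Then
`A = {h | h = 0 ∨ i < least element of the support of h}` is a convex subgroup of `G` not
containing `g`, and every convex subgroup of `G` not containing `g` is contained in `A`;
i.e. `A` is the largest convex subgroup `A(g)` of `G` not containing `g`. -/
theorem stmt_2 {Γ : Type*} [LinearOrder Γ] (g : Lex (Γ →₀ ℤ)) (hg : g ≠ 0) (i : Γ)
    (hi : (ofLex g).support.min = (i : WithBot Γ)) :
    IsConvexSubgroup {h : Lex (Γ →₀ ℤ) | h = 0 ∨ (i : WithBot Γ) < (ofLex h).support.min} ∧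
    g ∉ {h : Lex (Γ →₀ ℤ) | h = 0 ∨ (i : WithBot Γ) < (ofLex h).support.min} ∧
    ∀ H : Set (Lex (Γ →₀ ℤ)), IsConvexSubgroup H → g ∉ H →
      H ⊆ {h : Lex (Γ →₀ ℤ) | h = 0 ∨ (i : WithBot Γ) < (ofLex h).support.min} :=
  stmt_2_general g i hi
end

section
/- Let Γ be a nonempty linear order, G = Lex(Γ →₀ ℤ), and n ≥ 2 an integer. Then for every nonzero g ∈ G there exists h ∈ G with |h| ≤ |g| such that h is not of the form n • x for any x ∈ G. -/
/-!
Let `i` be the leading index of `|g|`, so `|g| i ≥ 1`. A multiple `n • x` has all coefficients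
divisible by `n`, so any element with a coefficient equal to `1` is not one. If `|g| i = 1`, take
`h = |g|`; otherwise `|g| i ≥ 2` and `h = single i 1` lies strictly between `0` and `|g|`.
-/

open Finsupp

lemma Finsupp.Lex.not_exists_eq_nsmul_of_apply_eq_one {Γ : Type*} {n : ℕ} (hn : 2 ≤ n)
    {h : Lex (Γ →₀ ℤ)} {i : Γ} (hi : ofLex h i = 1) : ¬ ∃ x : Lex (Γ →₀ ℤ), h = n • x := by
  rintro ⟨x, rfl⟩
  change (n • ofLex x) i = 1 at hi
  have hdvd : (n : ℤ) ∣ 1 := ⟨ofLex x i, by simpa [nsmul_eq_mul] using hi.symm⟩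
  have := Int.le_of_dvd one_pos hdvd
  omega

lemma Finsupp.Lex.toLex_single_one_lt {Γ N : Type*} [Preorder Γ] [Zero N] [One N] [LT N]
    {g : Lex (Γ →₀ N)} {i : Γ} (hlow : ∀ j < i, ofLex g j = 0) (hi : 1 < ofLex g i) :
    toLex (single i 1) < g :=
  Finsupp.Lex.lt_iff.2 ⟨i, fun j hj => by simp [single_eq_of_ne hj.ne, hlow j hj], by simpa⟩

theorem stmt_5_general {Γ : Type*} [LinearOrder Γ] (n : ℕ) (hn : 2 ≤ n)
    (g : Lex (Γ →₀ ℤ)) (hg : g ≠ 0) :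
    ∃ h : Lex (Γ →₀ ℤ), |h| ≤ |g| ∧ ¬ ∃ x : Lex (Γ →₀ ℤ), h = n • x := by
  obtain ⟨i, hlow, hpos⟩ := Finsupp.Lex.lt_iff.1 (abs_pos.2 hg)
  rcases (show 1 ≤ ofLex |g| i from hpos).eq_or_lt with hone | hgt
  · exact ⟨|g|, (abs_abs g).le, Finsupp.Lex.not_exists_eq_nsmul_of_apply_eq_one hn hone.symm⟩
  · refine ⟨toLex (single i 1), ?_,
      Finsupp.Lex.not_exists_eq_nsmul_of_apply_eq_one hn (i := i) (by simp)⟩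
    have hsingle_nonneg : 0 ≤ toLex (single i (1 : ℤ)) :=
      toLex_monotone (single_nonneg.2 zero_le_one)
    rw [abs_of_nonneg hsingle_nonneg]
    exact (Finsupp.Lex.toLex_single_one_lt (fun j hj => (hlow j hj).symm) hgt).le

/-- Let `Γ` be a nonempty linear order, `G = Lex (Γ →₀ ℤ)`, and `n ≥ 2`. Then for every nonzero
`g ∈ G` there exists `h ∈ G` with `|h| ≤ |g|` such that `h` is not of the form `n • x`. -/
theorem stmt_5 {Γ : Type*} [LinearOrder Γ] [Nonempty Γ] (n : ℕ) (hn : 2 ≤ n)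
    (g : Lex (Γ →₀ ℤ)) (hg : g ≠ 0) :
    ∃ h : Lex (Γ →₀ ℤ), |h| ≤ |g| ∧ ¬ ∃ x : Lex (Γ →₀ ℤ), h = n • x :=
  stmt_5_general n hn g hg
end

section
/- Let Γ be a nonempty linear order, G = Lex(Γ →₀ ℤ), let Δ be a nontrivial divisible linearly ordered abelian group, and let n ≥ 2 be an integer. In the lexicographic product G ×ₗ Δ (where the G-coordinate is dominant, so that {0} × Δ is a convex subgroup), there exists a nonzero element g such that every h with |h| ≤ |g| is of the form n • x. (Hence G ×ₗ Δ fails the first-order property, valid in G, that below every nonzero element there is an element not divisible by n.) -/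
/-!
Take `g = (0, |d|)` with `d ≠ 0`. The subgroup `{0} ×ₗ Δ` is convex, since the first coordinate
is monotone, so every `h` with `|h| ≤ g` lies in it; and this subgroup is a copy of `Δ`, hence
divisible.
-/

namespace Prod.Lex

variable {α β : Type*} [AddCommGroup α] [LinearOrder α] [IsOrderedAddMonoid α]
  [AddCommGroup β] [LinearOrder β]

theorem fst_ofLex_eq_zero_of_abs_le {h : α ×ₗ β} {d : β} (hh : |h| ≤ toLex (0, d)) :
    (ofLex h).1 = 0 := by
  have fst_le : ∀ k : α ×ₗ β, k ≤ |h| → (ofLex k).1 ≤ 0 := fun k hk ↦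
    Prod.Lex.monotone_fst_ofLex (hk.trans hh)
  exact le_antisymm (fst_le h (le_abs_self h)) (neg_nonpos.mp (fst_le (-h) (neg_le_abs h)))

theorem exists_nsmul_eq_of_abs_le {n : ℕ} (hdiv : ∀ d : β, ∃ e : β, n • e = d)
    {h : α ×ₗ β} {d : β} (hh : |h| ≤ toLex (0, d)) : ∃ x : α ×ₗ β, h = n • x := by
  obtain ⟨e, he⟩ := hdiv (ofLex h).2
  refine ⟨OrderAddMonoidHom.inrₗ α β e, ?_⟩
  rw [← map_nsmul, he, OrderAddMonoidHom.inrₗ_apply, ← fst_ofLex_eq_zero_of_abs_le hh]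
  rfl

end Prod.Lex

theorem stmt_6_general {Γ : Type*} [LinearOrder Γ]
    {Δ : Type*} [AddCommGroup Δ] [LinearOrder Δ] [IsOrderedAddMonoid Δ] [Nontrivial Δ]
    (hdiv : ∀ d : Δ, ∀ m : ℕ, 0 < m → ∃ e : Δ, m • e = d)
    (n : ℕ) (hn : 2 ≤ n) :
    ∃ g : Lex (Lex (Γ →₀ ℤ) × Δ), g ≠ 0 ∧
      ∀ h : Lex (Lex (Γ →₀ ℤ) × Δ), |h| ≤ |g| → ∃ x : Lex (Lex (Γ →₀ ℤ) × Δ), h = n • x := by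
  obtain ⟨d, hd⟩ := exists_ne (0 : Δ)
  have hg : (0 : Lex (Γ →₀ ℤ) ×ₗ Δ) < toLex (0, |d|) :=
    Prod.Lex.toLex_strictMono (Prod.mk_lt_mk_of_le_of_lt le_rfl (abs_pos.mpr hd))
  refine ⟨toLex (0, |d|), hg.ne', fun h hh ↦ ?_⟩
  rw [abs_of_pos hg] at hh
  exact Prod.Lex.exists_nsmul_eq_of_abs_le (fun d ↦ hdiv d n (by omega)) hh

/-- Let `Γ` be a nonempty linear order, `G = Lex (Γ →₀ ℤ)`, let `Δ` be a nontrivial divisible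
linearly ordered abelian group, and `n ≥ 2`. In the lexicographic product `G ×ₗ Δ` (the
`G`-coordinate dominant), there is a nonzero element `g` such that every `h` with `|h| ≤ |g|`
is of the form `n • x`. -/
theorem stmt_6 {Γ : Type*} [LinearOrder Γ] [Nonempty Γ]
    {Δ : Type*} [AddCommGroup Δ] [LinearOrder Δ] [IsOrderedAddMonoid Δ] [Nontrivial Δ]
    (hdiv : ∀ d : Δ, ∀ m : ℕ, 0 < m → ∃ e : Δ, m • e = d)
    (n : ℕ) (hn : 2 ≤ n) :
    ∃ g : Lex (Lex (Γ →₀ ℤ) × Δ), g ≠ 0 ∧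
      ∀ h : Lex (Lex (Γ →₀ ℤ) × Δ), |h| ≤ |g| → ∃ x : Lex (Lex (Γ →₀ ℤ) × Δ), h = n • x :=
  stmt_6_general hdiv n hn
end

section
/- Let G be a linearly ordered abelian group and equip the field K = HahnSeries G ℝ with the linear order in which x > 0 if and only if x is nonzero and its leading coefficient (the coefficient at the least element of its support) is positive. Then for all nonzero x, y ∈ K: order(x) = order(y) if and only if there exists a natural number n with |x| ≤ n • |y| and |y| ≤ n • |x|. (That is, the canonical Hahn series valuation x ↦ order(x) is the natural valuation of the ordered field K, and its value group is G.) -/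
/-- `x > 0` in the ordered field `K = HahnSeries G ℝ`: `x` is nonzero and its leading
coefficient (the coefficient at the least element of its support) is positive. -/
def HahnPos {G : Type*} [AddCommGroup G] [LinearOrder G] [IsOrderedAddMonoid G] (x : HahnSeries G ℝ) : Prop :=
  x ≠ 0 ∧ 0 < x.leadingCoeff

/-- The order of `K = HahnSeries G ℝ` determined by `HahnPos`: `x ≤ y` iff `x = y` or
`y - x > 0`. -/
def HahnLe {G : Type*} [AddCommGroup G] [LinearOrder G] [IsOrderedAddMonoid G] (x y : HahnSeries G ℝ) : Prop :=
  x = y ∨ HahnPos (y - x)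

open Classical in
/-- The absolute value on `K = HahnSeries G ℝ` with respect to this order. -/
noncomputable def HahnAbs {G : Type*} [AddCommGroup G] [LinearOrder G] [IsOrderedAddMonoid G] (x : HahnSeries G ℝ) :
    HahnSeries G ℝ :=
  if HahnPos (-x) then -x else x

/-!
The positive cone `HahnPos` is that of Mathlib's lexicographic order on `Lex ℝ⟦G⟧`, so `HahnLe`
and `HahnAbs` are its `≤` and `|·|`. Since `ℝ` is archimedean, the archimedean classes of
`Lex ℝ⟦G⟧` correspond exactly to the values of `orderTop`
(`HahnSeries.archimedeanClassOrderIsoWithTop`).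
-/

theorem ArchimedeanClass.mk_eq_mk_iff_exists_nsmul {M : Type*} [AddCommGroup M] [LinearOrder M]
    [IsOrderedAddMonoid M] {a b : M} :
    mk a = mk b ↔ ∃ n : ℕ, |a| ≤ n • |b| ∧ |b| ≤ n • |a| := by
  rw [mk_eq_mk]
  constructor
  · rintro ⟨⟨m, hm⟩, ⟨n, hn⟩⟩
    exact ⟨max m n, hn.trans (nsmul_le_nsmul_left (abs_nonneg b) (le_max_right m n)),
      hm.trans (nsmul_le_nsmul_left (abs_nonneg a) (le_max_left m n))⟩
  · rintro ⟨n, hab, hba⟩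
    exact ⟨⟨n, hba⟩, ⟨n, hab⟩⟩

namespace HahnSeries

variable {G : Type*} [AddCommGroup G] [LinearOrder G] [IsOrderedAddMonoid G]

theorem hahnPos_iff_toLex_pos {x : HahnSeries G ℝ} : HahnPos x ↔ 0 < toLex x := by
  rw [← leadingCoeff_pos_iff, ofLex_toLex, HahnPos, and_iff_right_iff_imp]
  exact fun h => leadingCoeff_ne_zero.mp h.ne'

theorem hahnLe_iff_toLex_le {x y : HahnSeries G ℝ} : HahnLe x y ↔ toLex x ≤ toLex y := by
  rw [HahnLe, hahnPos_iff_toLex_pos, toLex_sub, sub_pos, le_iff_eq_or_lt, toLex_inj]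

theorem toLex_hahnAbs (x : HahnSeries G ℝ) : toLex (HahnAbs x) = |toLex x| := by
  rw [HahnAbs]
  split_ifs with h
  · rw [hahnPos_iff_toLex_pos, toLex_neg, neg_pos] at h
    rw [toLex_neg, abs_of_neg h]
  · rw [hahnPos_iff_toLex_pos, toLex_neg, neg_pos, not_lt] at h
    rw [abs_of_nonneg h]

end HahnSeries

/-- Equip `K = HahnSeries G ℝ` with the linear order in which `x > 0` iff `x` is nonzero and
its leading coefficient is positive. For all nonzero `x, y ∈ K`: `order x = order y` iff there
is `n : ℕ` with `|x| ≤ n • |y|` and `|y| ≤ n • |x|`; that is, the Hahn series valuation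
`x ↦ order x` is the natural valuation of the ordered field `K`, with value group `G`. -/
theorem stmt_9 {G : Type*} [AddCommGroup G] [LinearOrder G] [IsOrderedAddMonoid G] (x y : HahnSeries G ℝ)
    (hx : x ≠ 0) (hy : y ≠ 0) :
    x.order = y.order ↔
      ∃ n : ℕ, HahnLe (HahnAbs x) (n • HahnAbs y) ∧ HahnLe (HahnAbs y) (n • HahnAbs x) := by
  have h_order : x.order = y.order ↔
      ArchimedeanClass.mk (toLex x) = ArchimedeanClass.mk (toLex y) := by
    rw [← (HahnSeries.archimedeanClassOrderIsoWithTop G ℝ).injective.eq_iff,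
      HahnSeries.archimedeanClassOrderIsoWithTop_apply,
      HahnSeries.archimedeanClassOrderIsoWithTop_apply, ofLex_toLex, ofLex_toLex,
      ← HahnSeries.order_eq_orderTop_of_ne_zero hx, ← HahnSeries.order_eq_orderTop_of_ne_zero hy,
      WithTop.coe_inj]
  simp only [h_order, ArchimedeanClass.mk_eq_mk_iff_exists_nsmul,
    HahnSeries.hahnLe_iff_toLex_le, toLex_smul, HahnSeries.toLex_hahnAbs]
  -- the `ℕ`-action transported along `toLex` is definitionally that of `Lex ℝ⟦G⟧`
  rfl
end

section
/- Let Γ₀ = ℕ ×ₗ (ℚ ⊕ₗ Fin 2) and Γ₁ = ℕ ×ₗ (ℚ ⊕ₗ Fin 3), each with the lexicographic order (these realize the orders ∑_{k∈ω}(ℚ+2) and ∑_{k∈ω}(ℚ+3) respectively), and let L = Γ₀ ⊕ₗ Γ₁ᵒᵈ be their lexicographic sum, with Γ₁ᵒᵈ the order-dual of Γ₁. Then the set of elements of L lying in the second summand Γ₁ᵒᵈ is a nonempty proper end segment of L that is definable without parameters in the first-order language of order. -/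
open FirstOrder

attribute [local instance] FirstOrder.Language.orderStructure

/-- `Γ₀ = ℕ ×ₗ (ℚ ⊕ₗ Fin 2)`, realizing the order `∑_{k ∈ ω} (ℚ + 2)`. -/
abbrev Gamma0 : Type := ℕ ×ₗ (ℚ ⊕ₗ Fin 2)

/-- `Γ₁ = ℕ ×ₗ (ℚ ⊕ₗ Fin 3)`, realizing the order `∑_{k ∈ ω} (ℚ + 3)`. -/
abbrev Gamma1 : Type := ℕ ×ₗ (ℚ ⊕ₗ Fin 3)

/-- `L = Γ₀ ⊕ₗ Γ₁ᵒᵈ`, the lexicographic sum of `Γ₀` and the order-dual of `Γ₁`. -/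
abbrev L11 : Type := Gamma0 ⊕ₗ Gamma1ᵒᵈ

/-- The set of elements of `L` lying in the second summand `Γ₁ᵒᵈ`. -/
def S11 : Set L11 := {x | ∃ y : Gamma1ᵒᵈ, x = toLex (Sum.inr y)}

/-!
A point `w` with `u ⋖ w ⋖ v` (an immediate predecessor and an immediate successor) exists in
`Γ₁ᵒᵈ`: the middle point of any copy of `3`. There is none in `Γ₀`: points of `ℚ` cover and are
covered by nothing, the first point of a copy of `2` has no immediate predecessor and the second
no immediate successor. Since `Γ₀` has no maximum, no such chain crosses from `Γ₀` into `Γ₁ᵒᵈ`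
either. Hence the second summand is the upward closure of the set of such middle points, which
is definable by a formula with three existential quantifiers.
-/

open Sum

namespace Sum.Lex

variable {α β : Type*} [Preorder α] [Preorder β]

theorem inl_covBy_inl_iff {a b : α} : toLex (inl a : α ⊕ β) ⋖ toLex (inl b) ↔ a ⋖ b := by
  simp [CovBy]

theorem inr_covBy_inr_iff {a b : β} : toLex (inr a : α ⊕ β) ⋖ toLex (inr b) ↔ a ⋖ b := by
  simp [CovBy]

theorem inl_covBy_inr_iff {a : α} {b : β} :
    toLex (inl a : α ⊕ β) ⋖ toLex (inr b) ↔ IsMax a ∧ IsMin b := by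
  simp [CovBy, isMax_iff_forall_not_lt, isMin_iff_forall_not_lt]

theorem exists_inr_of_covBy [DenselyOrdered α] [NoMaxOrder α] {x y : α ⊕ₗ β} (h : x ⋖ y) :
    ∃ b b', x = toLex (inr b) ∧ y = toLex (inr b') ∧ b ⋖ b' := by
  obtain ⟨x | b, rfl⟩ := toLex.surjective x <;> obtain ⟨y | b', rfl⟩ := toLex.surjective y
  · exact (not_covBy (inl_covBy_inl_iff.1 h)).elim
  · exact (not_isMax _ (inl_covBy_inr_iff.1 h).1).elim
  · exact (not_inr_lt_inl h.lt).elim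
  · exact ⟨b, b', rfl, rfl, inr_covBy_inr_iff.1 h⟩

theorem exists_covBy_covBy_of_inl [NoMaxOrder α] {u v : α ⊕ₗ β} {a : α}
    (hu : u ⋖ toLex (inl a)) (hv : toLex (inl a) ⋖ v) : ∃ a₁ a₂, a₁ ⋖ a ∧ a ⋖ a₂ := by
  obtain ⟨u | b, rfl⟩ := toLex.surjective u
  · obtain ⟨v | b', rfl⟩ := toLex.surjective v
    · exact ⟨u, v, inl_covBy_inl_iff.1 hu, inl_covBy_inl_iff.1 hv⟩
    · exact (not_isMax _ (inl_covBy_inr_iff.1 hv).1).elim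
  · exact (not_inr_lt_inl hu.lt).elim

end Sum.Lex

theorem CovBy.snd_ofLex {α β : Type*} [Preorder α] [Preorder β] [NoMinOrder β] {x y : α ×ₗ β}
    (h : x ⋖ y) : (ofLex x).2 ⋖ (ofLex y).2 := by
  rcases Prod.Lex.covBy_iff.1 h with ⟨-, h⟩ | ⟨-, -, h⟩
  · exact h
  · exact (not_isMin _ h).elim

theorem Gamma0.not_covBy_covBy {u w v : Gamma0} (hu : u ⋖ w) (hv : w ⋖ v) : False := by
  obtain ⟨i, j, -, hw, hij⟩ := Sum.Lex.exists_inr_of_covBy hu.snd_ofLex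
  obtain ⟨j', k, hw', -, hjk⟩ := Sum.Lex.exists_inr_of_covBy hv.snd_ofLex
  obtain rfl : j = j' := inr_injective (toLex.injective (hw.symm.trans hw'))
  have := hij.lt
  have := hjk.lt
  omega

theorem Gamma1.toLex_inr_covBy_toLex_inr (n : ℕ) {i j : Fin 3} (h : i ⋖ j) :
    (toLex (n, toLex (inr i)) : Gamma1) ⋖ toLex (n, toLex (inr j)) :=
  Prod.Lex.toLex_covBy_toLex_iff.2 (Or.inl ⟨rfl, Sum.Lex.inr_covBy_inr_iff.2 h⟩)

theorem isUpperSet_S11 : IsUpperSet S11 := by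
  rintro _ x hyx ⟨y, rfl⟩
  obtain ⟨x | z, rfl⟩ := toLex.surjective x
  · exact (Sum.Lex.not_inr_le_inl hyx).elim
  · exact ⟨z, rfl⟩

theorem mem_S11_iff {x : L11} : x ∈ S11 ↔ ∃ u w v, u ⋖ w ∧ w ⋖ v ∧ w ≤ x := by
  constructor
  · rintro ⟨y, rfl⟩
    let n := (ofLex (OrderDual.ofDual y)).1
    -- the copy of `3` following the one containing `y` lies below `y` in `Γ₁ᵒᵈ`
    let mid (i : Fin 3) : L11 := toLex (inr (OrderDual.toDual (toLex (n + 1, toLex (inr i)))))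
    have mid_covBy {i j : Fin 3} (h : i ⋖ j) : mid j ⋖ mid i :=
      Sum.Lex.inr_covBy_inr_iff.2 (toDual_covBy_toDual_iff.2 (Gamma1.toLex_inr_covBy_toLex_inr _ h))
    refine ⟨mid 2, mid 1, mid 0, mid_covBy (by simp), mid_covBy (by simp), ?_⟩
    exact Sum.Lex.inr_le_inr_iff.2 (OrderDual.toDual_le.2
      (Prod.Lex.lt_iff.2 (Or.inl (Nat.lt_succ_self n))).le)
  · rintro ⟨u, w, v, hu, hv, hw⟩
    obtain ⟨w | w, rfl⟩ := toLex.surjective w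
    · obtain ⟨_, _, h₁, h₂⟩ := Sum.Lex.exists_covBy_covBy_of_inl hu hv
      exact (Gamma0.not_covBy_covBy h₁ h₂).elim
    · exact isUpperSet_S11 hw ⟨w, rfl⟩

open Language in
def aboveCovByChainFormula : Language.order.Formula (Fin 1) :=
  ∃' ∃' ∃' (((&0).lt &1 ⊓ ∀' ((&0).lt &3 ⟹ ∼((&3).lt &1))) ⊓
    (((&1).lt &2 ⊓ ∀' ((&1).lt &3 ⟹ ∼((&3).lt &2))) ⊓ (&1).le (Term.var (inl 0))))

instance {M : Type*} [LE M] : Language.order.OrderedStructure M := ⟨fun _ => Iff.rfl⟩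

open Language in
theorem realize_aboveCovByChainFormula {M : Type*} [Preorder M] (x : Fin 1 → M) :
    aboveCovByChainFormula.Realize x ↔ ∃ u w v, u ⋖ w ∧ w ⋖ v ∧ w ≤ x 0 := by
  simp only [aboveCovByChainFormula, Formula.Realize, BoundedFormula.realize_ex,
    BoundedFormula.realize_all, BoundedFormula.realize_inf, BoundedFormula.realize_imp,
    BoundedFormula.realize_not, Term.realize_lt, Term.realize_le]
  rfl

/-- In `L = Γ₀ ⊕ₗ Γ₁ᵒᵈ` with `Γ₀ = ℕ ×ₗ (ℚ ⊕ₗ Fin 2)` and `Γ₁ = ℕ ×ₗ (ℚ ⊕ₗ Fin 3)`, the set of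
elements lying in the second summand `Γ₁ᵒᵈ` is a nonempty proper end segment of `L` that is
definable without parameters in the first-order language of order. -/
theorem stmt_11 :
    S11.Nonempty ∧ S11 ≠ Set.univ ∧ (∀ ⦃i j : L11⦄, i ∈ S11 → i ≤ j → j ∈ S11) ∧
      Set.Definable₁ (∅ : Set L11) Language.order S11 := by
  refine ⟨⟨_, default, rfl⟩, ?_, fun i j hi hij => isUpperSet_S11 hij hi, ?_⟩
  · exact (Set.ne_univ_iff_exists_notMem _).2
      ⟨toLex (inl default), fun ⟨y, hy⟩ => inl_ne_inr (toLex.injective hy)⟩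
  · rw [Set.Definable₁, Set.empty_definable_iff]
    exact ⟨aboveCovByChainFormula, Set.ext fun x =>
      mem_S11_iff.trans (realize_aboveCovByChainFormula x).symm⟩
end
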